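/- arXiv:1412.2150 — 2 statements merged into one kernel-verified Lean document; each statement's English description precedes it below -/
import Mathlib

section
/- Let Z be a square-integrable real random variable, L ∈ ℝ with 0 < P(Z < L) < 1, m = E[Z·1{Z < L}] / P(Z < L), and Z* = Z·1{Z ≥ L} + m·1{Z < L}. Suppose Y = β₀ + γZ + ε where ε is square-integrable with E[ε] = 0, E[ε·1{Z < L}] = 0, and E[ε·Z·1{Z ≥ L}] = 0 (so that ε is uncorrelated with Z*; this holds in particular when E(ε | Z) = 0). If Var(Z*) > 0, then the population simple-linear-regression slope of Y on Z* equals γ and the intercept equals β₀; that is, Cov(Y, Z*)/Var(Z*) = γ and E[Y] − γ·E[Z*] = β₀. -/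
/-!
Since `m` is the mean of `Z` on `{Z < L}`, the error `Z - Z*` is supported on `{Z < L}` and
integrates to zero there; `Z*` is constant on that set, so `Z - Z*` is orthogonal to both `1`
and `Z*`. Hence `E[Z*] = E[Z]` and `Cov(Z, Z*) = Var(Z*)`, while the hypotheses on `ε` say
exactly that `Cov(ε, Z*) = 0`. Bilinearity then gives `Cov(Y, Z*) = γ Var(Z*)`, and
linearity `E[Y] = β₀ + γ E[Z*]`.
-/

open MeasureTheory

section LinearModel

variable {Ω : Type*} [MeasurableSpace Ω] {P : Measure Ω} {Z X ε : Ω → ℝ} (β₀ γ : ℝ)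

lemma integral_linear_model [IsProbabilityMeasure P] (hZ : Integrable Z P)
    (hε : Integrable ε P) :
    ∫ ω, β₀ + γ * Z ω + ε ω ∂P = β₀ + γ * ∫ ω, Z ω ∂P + ∫ ω, ε ω ∂P := by
  have hlin : Integrable (fun ω => β₀ + γ * Z ω) P := (integrable_const β₀).add (hZ.const_mul γ)
  rw [integral_add hlin hε, integral_add (integrable_const β₀) (hZ.const_mul γ), integral_const, integral_const_mul]
  simp

lemma integral_linear_model_mul (hX : Integrable X P) (hZX : Integrable (fun ω => Z ω * X ω) P)
    (hεX : Integrable (fun ω => ε ω * X ω) P) :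
    ∫ ω, (β₀ + γ * Z ω + ε ω) * X ω ∂P
      = β₀ * ∫ ω, X ω ∂P + γ * ∫ ω, Z ω * X ω ∂P + ∫ ω, ε ω * X ω ∂P := by
  have hexpand : (fun ω => (β₀ + γ * Z ω + ε ω) * X ω)
      = fun ω => β₀ * X ω + γ * (Z ω * X ω) + ε ω * X ω := by
    funext ω; ring
  have hlin : Integrable (fun ω => β₀ * X ω + γ * (Z ω * X ω)) P :=
    (hX.const_mul β₀).add (hZX.const_mul γ)
  rw [hexpand, integral_add hlin hεX,
    integral_add (hX.const_mul β₀) (hZX.const_mul γ), integral_const_mul, integral_const_mul]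

theorem regression_slope_intercept_of_linear_model [IsProbabilityMeasure P] (hZ : MemLp Z 2 P)
    (hX : MemLp X 2 P) (hε : MemLp ε 2 P) (hε0 : ∫ ω, ε ω ∂P = 0)
    (hεX : ∫ ω, ε ω * X ω ∂P = 0) (hmean : ∫ ω, X ω ∂P = ∫ ω, Z ω ∂P)
    (hcov : ∫ ω, Z ω * X ω ∂P = ∫ ω, X ω * X ω ∂P)
    (hvar : (∫ ω, X ω * X ω ∂P) - (∫ ω, X ω ∂P) * (∫ ω, X ω ∂P) ≠ 0) :
    ((∫ ω, (β₀ + γ * Z ω + ε ω) * X ω ∂P)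
        - (∫ ω, β₀ + γ * Z ω + ε ω ∂P) * (∫ ω, X ω ∂P)) /
        ((∫ ω, X ω * X ω ∂P) - (∫ ω, X ω ∂P) * (∫ ω, X ω ∂P)) = γ ∧
    (∫ ω, β₀ + γ * Z ω + ε ω ∂P) - γ * (∫ ω, X ω ∂P) = β₀ := by
  rw [integral_linear_model_mul β₀ γ (hX.integrable one_le_two) (hZ.integrable_mul hX)
      (hε.integrable_mul hX),
    integral_linear_model β₀ γ (hZ.integrable one_le_two) (hε.integrable one_le_two),
    hε0, hεX, hcov, ← hmean]
  refine ⟨(div_eq_iff hvar).2 ?_, ?_⟩ <;> ring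

end LinearModel

section Imputation

variable {Ω : Type*} [MeasurableSpace Ω] {P : Measure Ω} {s : Set Ω} [DecidablePred (· ∈ s)]

lemma integral_piecewise_setAverage_mul [IsFiniteMeasure P] (hs : MeasurableSet s)
    {f h : Ω → ℝ} {c : ℝ} (hh : ∀ x ∈ s, h x = c)
    (hfh : Integrable (fun x => f x * h x) P)
    (hf'h : Integrable (fun x => s.piecewise (fun _ => ⨍ y in s, f y ∂P) f x * h x) P) :
    ∫ x, s.piecewise (fun _ => ⨍ y in s, f y ∂P) f x * h x ∂P = ∫ x, f x * h x ∂P := by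
  have hsupp : (fun x => f x * h x - s.piecewise (fun _ => ⨍ y in s, f y ∂P) f x * h x)
      = s.indicator fun x => (f x - ⨍ y in s, f y ∂P) * c := by
    funext x
    by_cases hx : x ∈ s <;> simp [hx, hh, sub_mul]
  rw [eq_comm, ← sub_eq_zero, ← integral_sub hfh hf'h, hsupp, integral_indicator hs,
    integral_mul_const, integral_sub_average, zero_mul]

lemma integral_mul_piecewise_const (hs : MeasurableSet s) {f g : Ω → ℝ} (c : ℝ)
    (hg : IntegrableOn g s P) (hgf : IntegrableOn (fun x => g x * f x) sᶜ P) :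
    ∫ x, g x * s.piecewise (fun _ => c) f x ∂P
      = c * ∫ x in s, g x ∂P + ∫ x in sᶜ, g x * f x ∂P := by
  rw [← integral_const_mul, ← integral_piecewise hs (hg.const_mul c) hgf]
  congr 1
  funext x
  by_cases hx : x ∈ s <;> simp [hx, mul_comm]

end Imputation

theorem stmt_9_general
    (Ω : Type*) [MeasurableSpace Ω] (P : Measure Ω) [IsProbabilityMeasure P]
    (Z : Ω → ℝ) (hZmeas : Measurable Z) (hZ2 : MemLp Z 2 P)
    (L : ℝ)
    (m : ℝ) (hm : m = (∫ ω in {ω | Z ω < L}, Z ω ∂P) / (P {ω | Z ω < L}).toReal)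
    (Zstar : Ω → ℝ) (hZstar : ∀ ω, Zstar ω = if Z ω < L then m else Z ω)
    (β₀ γ : ℝ) (ε : Ω → ℝ) (hε2 : MemLp ε 2 P)
    (Y : Ω → ℝ) (hY : ∀ ω, Y ω = β₀ + γ * Z ω + ε ω)
    (hε0 : ∫ ω, ε ω ∂P = 0)
    (hε1 : ∫ ω in {ω | Z ω < L}, ε ω ∂P = 0)
    (hε2' : ∫ ω in {ω | L ≤ Z ω}, ε ω * Z ω ∂P = 0)
    (hVarpos :
      0 < (∫ ω, Zstar ω * Zstar ω ∂P) - (∫ ω, Zstar ω ∂P) * (∫ ω, Zstar ω ∂P)) :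
    ((∫ ω, Y ω * Zstar ω ∂P) - (∫ ω, Y ω ∂P) * (∫ ω, Zstar ω ∂P)) /
        ((∫ ω, Zstar ω * Zstar ω ∂P) - (∫ ω, Zstar ω ∂P) * (∫ ω, Zstar ω ∂P)) = γ ∧
    (∫ ω, Y ω ∂P) - γ * (∫ ω, Zstar ω ∂P) = β₀ := by
  set s := {ω | Z ω < L}
  have hs : MeasurableSet s := measurableSet_lt hZmeas measurable_const
  have hsc : sᶜ = {ω | L ≤ Z ω} := by ext; simp [s]
  obtain rfl : Zstar = s.piecewise (fun _ => m) Z := funext hZstar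
  obtain rfl : Y = fun ω => β₀ + γ * Z ω + ε ω := funext hY
  have hZstar2 : MemLp (s.piecewise (fun _ => m) Z) 2 P :=
    (memLp_const m).restrict s |>.piecewise hs (hZ2.restrict sᶜ)
  have hZstar_eq : ∀ ω ∈ s, s.piecewise (fun _ => m) Z ω = m :=
    fun ω hω => Set.piecewise_eq_of_mem _ _ _ hω
  obtain rfl : m = ⨍ ω in s, Z ω ∂P := by
    rw [hm, setAverage_eq, measureReal_def, smul_eq_mul, inv_mul_eq_div]
  refine regression_slope_intercept_of_linear_model β₀ γ hZ2 hZstar2 hε2 hε0 ?_ ?_ ?_ (ne_of_gt hVarpos)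
  · rw [integral_mul_piecewise_const hs _ (hε2.integrable one_le_two).integrableOn
      (hε2.integrable_mul hZ2).integrableOn, hε1, hsc, hε2', mul_zero, add_zero]
  · simpa using integral_piecewise_setAverage_mul hs (h := fun _ => 1) (fun _ _ => rfl)
      (by simpa using hZ2.integrable one_le_two) (by simpa using hZstar2.integrable one_le_two)
  · exact (integral_piecewise_setAverage_mul hs hZstar_eq (hZ2.integrable_mul hZstar2)
      (hZstar2.integrable_mul hZstar2)).symm

/-- In the simple linear regression `Y = β₀ + γZ + ε` with `ε` uncorrelated with the
substituted covariate `Z* = Z·1{Z ≥ L} + E[Z | Z < L]·1{Z < L}`, the population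
regression of `Y` on `Z*` recovers slope `γ` and intercept `β₀`. -/
theorem stmt_9
    (Ω : Type*) [MeasurableSpace Ω] (P : Measure Ω) [IsProbabilityMeasure P]
    (Z : Ω → ℝ) (hZmeas : Measurable Z) (hZ2 : MemLp Z 2 P)
    (L : ℝ)
    (h0 : 0 < P {ω | Z ω < L}) (h1 : P {ω | Z ω < L} < 1)
    (m : ℝ) (hm : m = (∫ ω in {ω | Z ω < L}, Z ω ∂P) / (P {ω | Z ω < L}).toReal)
    (Zstar : Ω → ℝ) (hZstar : ∀ ω, Zstar ω = if Z ω < L then m else Z ω)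
    (β₀ γ : ℝ) (ε : Ω → ℝ) (hεmeas : Measurable ε) (hε2 : MemLp ε 2 P)
    (Y : Ω → ℝ) (hY : ∀ ω, Y ω = β₀ + γ * Z ω + ε ω)
    (hε0 : ∫ ω, ε ω ∂P = 0)
    (hε1 : ∫ ω in {ω | Z ω < L}, ε ω ∂P = 0)
    (hε2' : ∫ ω in {ω | L ≤ Z ω}, ε ω * Z ω ∂P = 0)
    (hVarpos :
      0 < (∫ ω, Zstar ω * Zstar ω ∂P) - (∫ ω, Zstar ω ∂P) * (∫ ω, Zstar ω ∂P)) :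
    ((∫ ω, Y ω * Zstar ω ∂P) - (∫ ω, Y ω ∂P) * (∫ ω, Zstar ω ∂P)) /
        ((∫ ω, Zstar ω * Zstar ω ∂P) - (∫ ω, Zstar ω ∂P) * (∫ ω, Zstar ω ∂P)) = γ ∧
    (∫ ω, Y ω ∂P) - γ * (∫ ω, Zstar ω ∂P) = β₀ :=
  stmt_9_general Ω P Z hZmeas hZ2 L m hm Zstar hZstar β₀ γ ε hε2 Y hY hε0 hε1 hε2' hVarpos
end

section
/- Let μ be a σ-finite measure on ℝ, ν a probability measure on a measurable space 𝒳 ⊆ ℝ^p, and for each x ∈ 𝒳 let F₁(·|x) be a probability measure on ℝ (a measurable kernel). Let d : ℝ × 𝒳 → ℝ^k be bounded measurable, θ₀ ∈ ℝ^k, a > 0, c : ℝ → ℝ measurable, and b : ℝ → ℝ differentiable with derivative ḃ, and define f(y|t,x) = exp{(y·⟨d(t,x), θ₀⟩ − b(⟨d(t,x), θ₀⟩))/a + c(y)}. Assume: (i) for every (t,x), y ↦ f(y|t,x) is a probability density with respect to μ satisfying ∫ y f(y|t,x) dμ(y) = ḃ(⟨d(t,x), θ₀⟩); (ii) for ν-almost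 every x and μ-almost every y, Den(y,x) := ∫_{(C,∞)} f(y|s,x) dF₁(s|x) > 0; (iii) all integrals below converge absolutely. Let C ∈ ℝ and define R(y,x) = Den(y,x)^{-1} · ∫_{(C,∞)} f(y|s,x) · (y − ḃ(⟨d(s,x), θ₀⟩)) · d(s,x) dF₁(s|x). Then the full estimating function is unbiased at θ₀: ∫_𝒳 ∫_ℝ ∫_ℝ [ 1{t ≤ C}·(y − ḃ(⟨d(t,x), θ₀⟩))·d(t,x) + 1{t > C}·R(y,x) ] · f(y|t,x) dμ(y) dF₁(t|x) dν(x) = 0 (a vector identity in ℝ^k). -/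
/-!
Fix `x`. The complete-case term integrates to zero in `y` because the mean of `f(·|t,x)` is
`ḃ(⟨d(t,x), θ₀⟩)`. The censored term `R(y,x)` is the average over `s > C` of the weighted score
`f(y|s,x)(y − ḃ(⟨d(s,x), θ₀⟩)) d(s,x)` divided by `Den(y,x)`, the total weight. Integrating
`f(y|t,x) R(y,x)` over `t > C` therefore cancels `Den(y,x)`. By Fubini, what remains is the
integral of the weighted score itself, and this vanishes in `y` for the same reason as before.
-/

open MeasureTheory Function

section Score

variable {μ : Measure ℝ} {g : ℝ → ℝ} {m : ℝ}

theorem integral_sub_mul_eq_zero (hg : Integrable g μ) (hg_one : ∫ y, g y ∂μ = 1)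
    (hyg : Integrable (fun y => y * g y) μ) (hm : ∫ y, y * g y ∂μ = m) :
    ∫ y, (y - m) * g y ∂μ = 0 := by
  simp only [sub_mul]
  rw [integral_sub hyg (hg.const_mul m), integral_const_mul, hm, hg_one, mul_one, sub_self]

variable {E : Type*} [NormedAddCommGroup E] [NormedSpace ℝ E]

theorem integrable_mul_sub_mul_smul (hg : Integrable g μ)
    (hyg : Integrable (fun y => y * g y) μ) (m r : ℝ) (v : E) :
    Integrable (fun y => (r * (y - m) * g y) • v) μ := by
  simp only [mul_assoc, mul_sub, sub_mul]
  exact (((hyg.const_mul r).sub ((hg.const_mul m).const_mul r))).smul_const v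

theorem integral_mul_sub_mul_smul_eq_zero [CompleteSpace E] (hg : Integrable g μ)
    (hg_one : ∫ y, g y ∂μ = 1) (hyg : Integrable (fun y => y * g y) μ)
    (hm : ∫ y, y * g y ∂μ = m) (r : ℝ) (v : E) :
    ∫ y, (r * (y - m) * g y) • v ∂μ = 0 := by
  simp only [mul_assoc]
  rw [integral_smul_const, integral_const_mul, integral_sub_mul_eq_zero hg hg_one hyg hm,
    mul_zero, zero_smul]

end Score

theorem integral_add_eq_right_of_integral_eq_zero {α E : Type*} [MeasurableSpace α]
    [NormedAddCommGroup E] [NormedSpace ℝ E] {μ : Measure α} {f g : α → E}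
    (hf : Integrable f μ) (hf_zero : ∫ a, f a ∂μ = 0) :
    ∫ a, f a + g a ∂μ = ∫ a, g a ∂μ := by
  by_cases hg : Integrable g μ
  · rw [integral_add hf hg, hf_zero, zero_add]
  · have hfg : ¬Integrable (fun a => f a + g a) μ := fun hfg =>
      hg ((hfg.sub hf).congr (.of_forall fun a => add_sub_cancel_left _ _))
    rw [integral_undef hg, integral_undef hfg]

theorem integral_ite_lt_smul {E : Type*} [NormedAddCommGroup E] [NormedSpace ℝ E]
    {κ : Measure ℝ} (C : ℝ) (G : ℝ → E) :
    ∫ t, (if C < t then (1 : ℝ) else 0) • G t ∂κ = ∫ t in Set.Ioi C, G t ∂κ := by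
  rw [← integral_indicator measurableSet_Ioi]
  congr with t
  by_cases ht : C < t <;> simp [ht]

theorem measurable_exp_family_density {T : Type*} [MeasurableSpace T] {η : T → ℝ}
    (hη : Measurable η) {b c : ℝ → ℝ} (hb : Measurable b) (hc : Measurable c) (a : ℝ) :
    Measurable fun q : T × ℝ => Real.exp ((q.2 * η q.1 - b (η q.1)) / a + c q.2) := by
  fun_prop

section Tower

variable {T Y E : Type*} [MeasurableSpace T] [MeasurableSpace Y]
  [NormedAddCommGroup E] [NormedSpace ℝ E] [CompleteSpace E]
  {κ : Measure T} {μ : Measure Y} [SFinite κ] [SFinite μ]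

/- With `w` a weight, `(∫ s, w s y ∂κ)⁻¹ • ∫ s, H s y ∂κ` is the conditional mean of `H / w`
given `y`; the statement is the tower property for it. -/
theorem integral_integral_smul_inv_integral_smul_integral {w : T → Y → ℝ} {H : T → Y → E}
    (hw_nonneg : ∀ t y, 0 ≤ w t y) (hw : AEStronglyMeasurable (uncurry w) (κ.prod μ))
    (hH : Integrable (uncurry H) (κ.prod μ)) (hpos : ∀ᵐ y ∂μ, 0 < ∫ t, w t y ∂κ) :
    ∫ t, ∫ y, w t y • ((∫ s, w s y ∂κ)⁻¹ • ∫ s, H s y ∂κ) ∂μ ∂κ = ∫ t, ∫ y, H t y ∂μ ∂κ := by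
  set W := fun y => ∫ s, w s y ∂κ
  set G := fun y => ∫ s, H s y ∂κ
  have hWG : ∀ᵐ y ∂μ, W y • (W y)⁻¹ • G y = G y := by
    filter_upwards [hpos] with y hy using smul_inv_smul₀ hy.ne' _
  have hG : Integrable G μ := hH.integral_prod_right
  have hW : AEStronglyMeasurable W μ := hw.prod_swap.integral_prod_right'
  have hR : AEStronglyMeasurable (fun y => (W y)⁻¹ • G y) μ :=
    hW.aemeasurable.inv.aestronglyMeasurable.smul hG.1
  have hint : Integrable (fun q : T × Y => w q.1 q.2 • ((W q.2)⁻¹ • G q.2)) (κ.prod μ) := by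
    refine (integrable_prod_iff' (hw.smul (hR.comp_snd (μ := κ)))).2 ⟨?_, hG.norm.congr ?_⟩
    · filter_upwards [hpos] with y hy
      exact (Integrable.of_integral_ne_zero hy.ne').smul_const ((W y)⁻¹ • G y)
    · filter_upwards [hWG, hpos] with y hy hy_pos
      show ‖G y‖ = ∫ t, ‖w t y • ((W y)⁻¹ • G y)‖ ∂κ
      simp only [norm_smul, fun t => Real.norm_of_nonneg (hw_nonneg t y)]
      rw [integral_mul_const]
      conv_lhs => rw [← hy, norm_smul, norm_smul, Real.norm_of_nonneg hy_pos.le]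
  calc ∫ t, ∫ y, w t y • ((W y)⁻¹ • G y) ∂μ ∂κ
      = ∫ y, ∫ t, w t y • ((W y)⁻¹ • G y) ∂κ ∂μ := integral_integral_swap hint
    _ = ∫ y, G y ∂μ := integral_congr_ae <| by
        filter_upwards [hWG] with y hy
        rw [integral_smul_const, hy]
    _ = ∫ t, ∫ y, H t y ∂μ ∂κ := (integral_integral_swap hH).symm

end Tower

theorem stmt_11_general {p k : ℕ}
    (μ : Measure ℝ) [SigmaFinite μ]
    (ν : Measure (Fin p → ℝ))
    (F₁ : (Fin p → ℝ) → Measure ℝ) (hF₁prob : ∀ x, IsProbabilityMeasure (F₁ x))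
    (d : ℝ × (Fin p → ℝ) → EuclideanSpace ℝ (Fin k)) (hdmeas : Measurable d)
    (θ₀ : EuclideanSpace ℝ (Fin k))
    (a : ℝ)
    (c : ℝ → ℝ) (hcmeas : Measurable c)
    (b b' : ℝ → ℝ) (hb : ∀ s, HasDerivAt b (b' s) s)
    (f : ℝ → ℝ → (Fin p → ℝ) → ℝ)
    (hf : ∀ y t x, f y t x =
      Real.exp ((y * (inner ℝ (d (t, x)) θ₀ : ℝ) - b (inner ℝ (d (t, x)) θ₀ : ℝ)) / a + c y))
    (hdens : ∀ t x, Integrable (fun y => f y t x) μ ∧ ∫ y, f y t x ∂μ = 1)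
    (hmean : ∀ t x, Integrable (fun y => y * f y t x) μ ∧
      ∫ y, y * f y t x ∂μ = b' (inner ℝ (d (t, x)) θ₀ : ℝ))
    (C : ℝ)
    (Den : ℝ → (Fin p → ℝ) → ℝ)
    (hDen : ∀ y x, Den y x = ∫ s in Set.Ioi C, f y s x ∂(F₁ x))
    (hDenpos : ∀ᵐ x ∂ν, ∀ᵐ y ∂μ, 0 < Den y x)
    (R : ℝ → (Fin p → ℝ) → EuclideanSpace ℝ (Fin k))
    (hR : ∀ y x, R y x = (Den y x)⁻¹ •
      ∫ s in Set.Ioi C, ((y - b' (inner ℝ (d (s, x)) θ₀ : ℝ)) * f y s x) • d (s, x) ∂(F₁ x))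
    (hFub : ∀ x, Integrable (fun q : ℝ × ℝ =>
      ((q.2 - b' (inner ℝ (d (q.1, x)) θ₀ : ℝ)) * f q.2 q.1 x) • d (q.1, x))
      (((F₁ x).restrict (Set.Ioi C)).prod μ)) :
    ∫ x, ∫ t, ∫ y,
      (((if t ≤ C then (1 : ℝ) else 0) * (y - b' (inner ℝ (d (t, x)) θ₀ : ℝ)) * f y t x) •
          d (t, x) +
        ((if C < t then (1 : ℝ) else 0) * f y t x) • R y x) ∂μ ∂(F₁ x) ∂ν = 0 := by
  have hb_cont : Continuous b := continuous_iff_continuousAt.2 fun s => (hb s).continuousAt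
  have hf_meas : ∀ x, Measurable fun q : ℝ × ℝ => f q.2 q.1 x := fun x => by
    simp only [hf]
    exact measurable_exp_family_density (η := fun t => inner ℝ (d (t, x)) θ₀) (by fun_prop)
      hb_cont.measurable hcmeas a
  refine integral_eq_zero_of_ae ?_
  filter_upwards [hDenpos] with x hx
  have := hF₁prob x
  have hscore_int := fun t r =>
    integrable_mul_sub_mul_smul (hdens t x).1 (hmean t x).1
      (b' (inner ℝ (d (t, x)) θ₀)) r (d (t, x))
  have hscore := fun t r => integral_mul_sub_mul_smul_eq_zero (hdens t x).1 (hdens t x).2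
    (hmean t x).1 (hmean t x).2 r (d (t, x))
  calc _ = ∫ t, (if C < t then (1 : ℝ) else 0) • ∫ y, f y t x • R y x ∂μ ∂F₁ x := by
          refine integral_congr_ae (.of_forall fun t => ?_)
          beta_reduce
          rw [integral_add_eq_right_of_integral_eq_zero (hscore_int t _) (hscore t _)]
          simp only [mul_smul]
          exact integral_smul _ _
    _ = ∫ t in Set.Ioi C, ∫ y, f y t x • R y x ∂μ ∂F₁ x := integral_ite_lt_smul C _
    _ = ∫ t in Set.Ioi C, ∫ y, ((y - b' (inner ℝ (d (t, x)) θ₀ : ℝ)) * f y t x) • d (t, x) ∂μ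
          ∂F₁ x := by
          simp only [hR, hDen] at hx ⊢
          exact integral_integral_smul_inv_integral_smul_integral
            (fun t y => (hf y t x ▸ Real.exp_pos _).le) (hf_meas x).aestronglyMeasurable
            (hFub x) hx
    _ = 0 := by simpa using integral_congr_ae (.of_forall fun t => hscore t 1)

/-- Unbiasedness of the full (complete-case plus censored-case) estimating function at the
true parameter `θ₀`: the population score
`E[ 1{T ≤ C}(Y − ḃ(⟨d(T,X),θ₀⟩))d(T,X) + 1{T > C} R(Y,X) ]` vanishes, where
`R(y,x) = Den(y,x)⁻¹ ∫_{(C,∞)} f(y|s,x)(y − ḃ(⟨d(s,x),θ₀⟩)) d(s,x) dF₁(s|x)` and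
`Den(y,x) = ∫_{(C,∞)} f(y|s,x) dF₁(s|x)`. -/
theorem stmt_11 {p k : ℕ}
    (μ : Measure ℝ) [SigmaFinite μ]
    (ν : Measure (Fin p → ℝ)) [IsProbabilityMeasure ν]
    (F₁ : (Fin p → ℝ) → Measure ℝ) (hF₁prob : ∀ x, IsProbabilityMeasure (F₁ x))
    (hF₁meas : ∀ s : Set ℝ, MeasurableSet s → Measurable fun x => F₁ x s)
    (d : ℝ × (Fin p → ℝ) → EuclideanSpace ℝ (Fin k)) (hdmeas : Measurable d)
    (Md : ℝ) (hdbd : ∀ q, ‖d q‖ ≤ Md)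
    (θ₀ : EuclideanSpace ℝ (Fin k))
    (a : ℝ) (ha : 0 < a)
    (c : ℝ → ℝ) (hcmeas : Measurable c)
    (b b' : ℝ → ℝ) (hb : ∀ s, HasDerivAt b (b' s) s)
    (f : ℝ → ℝ → (Fin p → ℝ) → ℝ)
    (hf : ∀ y t x, f y t x =
      Real.exp ((y * (inner ℝ (d (t, x)) θ₀ : ℝ) - b (inner ℝ (d (t, x)) θ₀ : ℝ)) / a + c y))
    (hdens : ∀ t x, Integrable (fun y => f y t x) μ ∧ ∫ y, f y t x ∂μ = 1)
    (hmean : ∀ t x, Integrable (fun y => y * f y t x) μ ∧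
      ∫ y, y * f y t x ∂μ = b' (inner ℝ (d (t, x)) θ₀ : ℝ))
    (C : ℝ)
    (Den : ℝ → (Fin p → ℝ) → ℝ)
    (hDenInt : ∀ y x, Integrable (fun s => f y s x) ((F₁ x).restrict (Set.Ioi C)))
    (hDen : ∀ y x, Den y x = ∫ s in Set.Ioi C, f y s x ∂(F₁ x))
    (hDenpos : ∀ᵐ x ∂ν, ∀ᵐ y ∂μ, 0 < Den y x)
    (R : ℝ → (Fin p → ℝ) → EuclideanSpace ℝ (Fin k))
    (hRInt : ∀ y x, Integrable (fun s =>
      ((y - b' (inner ℝ (d (s, x)) θ₀ : ℝ)) * f y s x) • d (s, x))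
      ((F₁ x).restrict (Set.Ioi C)))
    (hR : ∀ y x, R y x = (Den y x)⁻¹ •
      ∫ s in Set.Ioi C, ((y - b' (inner ℝ (d (s, x)) θ₀ : ℝ)) * f y s x) • d (s, x) ∂(F₁ x))
    (hFub : ∀ x, Integrable (fun q : ℝ × ℝ =>
      ((q.2 - b' (inner ℝ (d (q.1, x)) θ₀ : ℝ)) * f q.2 q.1 x) • d (q.1, x))
      (((F₁ x).restrict (Set.Ioi C)).prod μ))
    (hint1 : ∀ t x, Integrable (fun y =>
      ((if t ≤ C then (1 : ℝ) else 0) * (y - b' (inner ℝ (d (t, x)) θ₀ : ℝ)) * f y t x) •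
          d (t, x) +
        ((if C < t then (1 : ℝ) else 0) * f y t x) • R y x) μ)
    (hint2 : ∀ x, Integrable (fun t => ∫ y,
      (((if t ≤ C then (1 : ℝ) else 0) * (y - b' (inner ℝ (d (t, x)) θ₀ : ℝ)) * f y t x) •
          d (t, x) +
        ((if C < t then (1 : ℝ) else 0) * f y t x) • R y x) ∂μ) (F₁ x))
    (hint3 : Integrable (fun x => ∫ t, ∫ y,
      (((if t ≤ C then (1 : ℝ) else 0) * (y - b' (inner ℝ (d (t, x)) θ₀ : ℝ)) * f y t x) •
          d (t, x) +
        ((if C < t then (1 : ℝ) else 0) * f y t x) • R y x) ∂μ ∂(F₁ x)) ν) :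
    ∫ x, ∫ t, ∫ y,
      (((if t ≤ C then (1 : ℝ) else 0) * (y - b' (inner ℝ (d (t, x)) θ₀ : ℝ)) * f y t x) •
          d (t, x) +
        ((if C < t then (1 : ℝ) else 0) * f y t x) • R y x) ∂μ ∂(F₁ x) ∂ν = 0 :=
  stmt_11_general μ ν F₁ hF₁prob d hdmeas θ₀ a c hcmeas b b' hb f hf hdens hmean C Den hDen hDenpos
    R hR hFub
end
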